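/- arXiv:1902.07956 — 4 statements merged into one kernel-verified Lean document; each statement's English description precedes it below -/
import Mathlib

section
/- Let f : [0,∞) → ℝ be convex with f(1) = 0, and let L_m = E[D_f(P_Y^{(m)} ‖ P_Y)] be the expected f-divergence between the output distribution induced by a random codebook of m i.i.d. codewords and the true output distribution. Then L_m is nonincreasing in m: L_m ≤ L_{m−1} for all m ≥ 2. -/
open MeasureTheory Real

/-- Monotonicity of the expected `f`-divergence of the random-codebook output
distribution.  Here `r x y = (dP_{Y|X=x}/dP_Y)(y)` is the Radon–Nikodym derivative of the
channel output given input `x` with respect to the true output law `P_Y`, so that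
`dP_Y^{(m)}/dP_Y (y) = (1/m) ∑_k r (X_k) y` and
`L_m = E[D_f(P_Y^{(m)} ‖ P_Y)] = E[f((1/m) ∑_k r (X_k) Y)]` with
`(X_1,…,X_m, Y) ∼ P_X^{⊗m} ⊗ P_Y`.  Then `L_m ≤ L_{m-1}` for `m ≥ 2`. -/
theorem stmt4 {α β : Type*} [MeasurableSpace α] [MeasurableSpace β]
    (PX : Measure α) [IsProbabilityMeasure PX] (PY : Measure β) [IsProbabilityMeasure PY]
    (f : ℝ → ℝ) (hf : ConvexOn ℝ (Set.Ici 0) f) (hf1 : f 1 = 0)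
    (r : α → β → ℝ) (hrmeas : Measurable (Function.uncurry r))
    (hr0 : ∀ x y, 0 ≤ r x y)
    (hrdens : ∀ x, ∫ y, r x y ∂PY = 1)
    (m : ℕ) (hm : 2 ≤ m)
    (hint_m : Integrable
      (fun p : (Fin m → α) × β => f ((1 / (m : ℝ)) * ∑ k : Fin m, r (p.1 k) p.2))
      ((Measure.pi fun _ : Fin m => PX).prod PY))
    (hint_m1 : Integrable
      (fun p : (Fin (m - 1) → α) × β =>
        f ((1 / ((m : ℝ) - 1)) * ∑ k : Fin (m - 1), r (p.1 k) p.2))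
      ((Measure.pi fun _ : Fin (m - 1) => PX).prod PY)) :
    (∫ p : (Fin m → α) × β, f ((1 / (m : ℝ)) * ∑ k : Fin m, r (p.1 k) p.2)
        ∂((Measure.pi fun _ : Fin m => PX).prod PY)) ≤
      ∫ p : (Fin (m - 1) → α) × β,
        f ((1 / ((m : ℝ) - 1)) * ∑ k : Fin (m - 1), r (p.1 k) p.2)
        ∂((Measure.pi fun _ : Fin (m - 1) => PX).prod PY) := by

  -- Set up: write `m = n + 1` with `1 ≤ n`.
  obtain ⟨n, rfl⟩ : ∃ n, m = n + 1 := ⟨m - 1, by omega⟩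
  have hn : 1 ≤ n := by omega
  have hms : n + 1 - 1 = n := by omega
  rw [show ((n:ℕ)+1-1) = n from hms] at hint_m1 ⊢
  have hn0 : (0:ℝ) < n := by exact_mod_cast hn
  have hm0 : (0:ℝ) < (n:ℝ) + 1 := by positivity
  have hcast : ((n:ℝ) + 1 : ℝ) - 1 = (n:ℝ) := by ring
  rw [Nat.cast_add, Nat.cast_one, hcast] at hint_m1 ⊢
  set μ : Measure (Fin (n+1) → α) := Measure.pi fun _ => PX with hμ
  set ν : Measure (Fin n → α) := Measure.pi fun _ => PX with hν
  set g : (Fin n → α) × β → ℝ :=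
    fun q => f ((1 / (n:ℝ)) * ∑ k : Fin n, r (q.1 k) q.2) with hg
  -- the leave-one-out maps
  set T : Fin (n+1) → ((Fin (n+1) → α) × β → (Fin n → α) × β) :=
    fun j p => (fun k => p.1 (j.succAbove k), p.2) with hT
  have hTmp : ∀ j : Fin (n+1), MeasurePreserving (T j) (μ.prod PY) (ν.prod PY) := by
    intro j
    have h1 : MeasurePreserving
        (fun x : Fin (n+1) → α => fun k => x (j.succAbove k)) μ ν := by
      have he := measurePreserving_piFinSuccAbove (fun _ : Fin (n+1) => PX) j
      have hsnd : MeasurePreserving (Prod.snd : α × (Fin n → α) → (Fin n → α))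
          (PX.prod ν) ν := by
        refine ⟨measurable_snd, ?_⟩
        simp [Measure.map_snd_prod]
      exact hsnd.comp he
    exact h1.prod (MeasurePreserving.id PY)
  -- change of variables for each `j`
  have hTint : ∀ j : Fin (n+1), Integrable (fun p => g (T j p)) (μ.prod PY) := by
    intro j
    exact ((hTmp j).integrable_comp hint_m1.aestronglyMeasurable).2 hint_m1
  have hTeq : ∀ j : Fin (n+1),
      (∫ p, g (T j p) ∂(μ.prod PY)) = ∫ q, g q ∂(ν.prod PY) := by
    intro j
    rw [← (hTmp j).map_eq,
      integral_map (hTmp j).measurable.aemeasurable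
        (by rw [(hTmp j).map_eq]; exact hint_m1.aestronglyMeasurable)]
  -- pointwise Jensen inequality
  have hpt : ∀ p : (Fin (n+1) → α) × β,
      f ((1 / ((n:ℝ)+1)) * ∑ k : Fin (n+1), r (p.1 k) p.2) ≤
        ∑ j : Fin (n+1), (1 / ((n:ℝ)+1)) * g (T j p) := by
    intro p
    have harg : (1 / ((n:ℝ)+1)) * ∑ k : Fin (n+1), r (p.1 k) p.2 =
        ∑ j : Fin (n+1), (1 / ((n:ℝ)+1)) •
          ((1 / (n:ℝ)) * ∑ k : Fin n, r (p.1 (j.succAbove k)) p.2) := by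
      have hsucc : ∀ j : Fin (n+1),
          ∑ k : Fin n, r (p.1 (j.succAbove k)) p.2 =
            (∑ k : Fin (n+1), r (p.1 k) p.2) - r (p.1 j) p.2 := by
        intro j
        have := Fin.sum_univ_succAbove (fun k => r (p.1 k) p.2) j
        linarith [this]
      simp only [smul_eq_mul, hsucc]
      rw [← Finset.mul_sum, ← Finset.mul_sum, Finset.sum_sub_distrib,
        Finset.sum_const, Finset.card_univ, Fintype.card_fin, nsmul_eq_mul]
      field_simp
      push_cast
      ring
    have hjen := hf.map_sum_le (t := Finset.univ)
      (w := fun _ : Fin (n+1) => (1 / ((n:ℝ)+1)))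
      (p := fun j : Fin (n+1) => (1 / (n:ℝ)) * ∑ k : Fin n, r (p.1 (j.succAbove k)) p.2)
      (fun i _ => by positivity)
      (by simp [Finset.sum_const, Finset.card_univ]; field_simp)
      (fun i _ => by
        have : (0:ℝ) ≤ ∑ k : Fin n, r (p.1 (i.succAbove k)) p.2 :=
          Finset.sum_nonneg fun k _ => hr0 _ _
        exact Set.mem_Ici.2 (by positivity))
    rw [harg]
    simpa [smul_eq_mul, hg, hT] using hjen
  -- combine
  have hsum_int : Integrable
      (fun p => ∑ j : Fin (n+1), (1 / ((n:ℝ)+1)) * g (T j p)) (μ.prod PY) :=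
    integrable_finset_sum _ fun j _ => (hTint j).const_mul _
  calc (∫ p : (Fin (n+1) → α) × β,
        f ((1 / ((n:ℝ)+1)) * ∑ k : Fin (n+1), r (p.1 k) p.2) ∂(μ.prod PY))
      ≤ ∫ p, ∑ j : Fin (n+1), (1 / ((n:ℝ)+1)) * g (T j p) ∂(μ.prod PY) := by
        refine integral_mono ?_ hsum_int hpt
        simpa using hint_m
    _ = ∑ j : Fin (n+1), (1 / ((n:ℝ)+1)) * ∫ p, g (T j p) ∂(μ.prod PY) := by
        rw [integral_finset_sum _ fun j _ => (hTint j).const_mul _]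
        exact Finset.sum_congr rfl fun j _ => integral_const_mul _ _
    _ = ∫ q, g q ∂(ν.prod PY) := by
        rw [Finset.sum_congr rfl fun j _ => by rw [hTeq j]]
        rw [Finset.sum_const, Finset.card_univ, Fintype.card_fin, nsmul_eq_mul]
        push_cast
        field_simp
end

section
/- Let X₁, X₂, … be i.i.d. real random variables with law P_X, let M be a Poisson random variable with mean μ independent of the sequence, and let F be a measurable set. Then U = Σ_{k=1}^M X_k·1{X_k ∈ F} and V = Σ_{k=1}^M X_k·1{X_k ∉ F} are independent. -/
open MeasureTheory ProbabilityTheory Real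
open scoped ENNReal

namespace PoissonThinning

noncomputable def shapeVal (PX : Measure ℝ) (G A : Set ℝ) (m : ℕ) : ℝ≥0∞ :=
  Measure.pi (fun _ : Fin m => PX) {y | (∀ i, y i ∈ G) ∧ (∑ i, y i) ∈ A}

lemma shape_measurable {G A : Set ℝ} (hG : MeasurableSet G) (hA : MeasurableSet A)
    (ι : Type*) [Fintype ι] :
    MeasurableSet {y : ι → ℝ | (∀ i, y i ∈ G) ∧ (∑ i, y i) ∈ A} := by
  apply MeasurableSet.inter
  · show MeasurableSet {y : ι → ℝ | ∀ i, y i ∈ G}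
    have : {y : ι → ℝ | ∀ i, y i ∈ G} = ⋂ i, (fun y : ι → ℝ => y i) ⁻¹' G := by
      ext y; simp
    rw [this]
    exact MeasurableSet.iInter fun i => (measurable_pi_apply i) hG
  · show MeasurableSet {y : ι → ℝ | (∑ i, y i) ∈ A}
    exact (Finset.measurable_sum Finset.univ fun i _ => measurable_pi_apply i) hA

lemma shapeVal_eq (PX : Measure ℝ) [SigmaFinite PX] (G A : Set ℝ) (ι : Type*) [Fintype ι] :
    Measure.pi (fun _ : ι => PX) {y | (∀ i, y i ∈ G) ∧ (∑ i, y i) ∈ A}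
      = shapeVal PX G A (Fintype.card ι) := by
  classical
  set e : Fin (Fintype.card ι) ≃ ι := (Fintype.equivFin ι).symm with he
  have hmap := Measure.pi_map_piCongrLeft e (fun _ : ι => PX)
  rw [shapeVal, ← hmap, MeasurableEquiv.map_apply]
  congr 1
  ext y
  have hy : ∀ i : ι, (MeasurableEquiv.piCongrLeft (fun _ : ι => ℝ) e) y i = y (e.symm i) := by
    intro i
    conv_lhs => rw [← e.apply_symm_apply i]
    exact Equiv.piCongrLeft_apply_apply (fun _ : ι => ℝ) e y (e.symm i)
  simp only [Set.mem_preimage, Set.mem_setOf_eq]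
  constructor
  · rintro ⟨h1, h2⟩
    refine ⟨fun a => by simpa [hy] using h1 (e a), ?_⟩
    have : ∑ i : ι, (MeasurableEquiv.piCongrLeft (fun _ : ι => ℝ) e) y i
        = ∑ a : Fin (Fintype.card ι), y a := by
      simp_rw [hy]; exact Equiv.sum_comp e.symm _
    rwa [this] at h2
  · rintro ⟨h1, h2⟩
    refine ⟨fun i => by simpa [hy] using h1 (e.symm i), ?_⟩
    have : ∑ i : ι, (MeasurableEquiv.piCongrLeft (fun _ : ι => ℝ) e) y i
        = ∑ a : Fin (Fintype.card ι), y a := by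
      simp_rw [hy]; exact Equiv.sum_comp e.symm _
    rwa [this]

lemma subset_piece (PX : Measure ℝ) [IsProbabilityMeasure PX]
    {F A B : Set ℝ} (hF : MeasurableSet F) (hA : MeasurableSet A) (hB : MeasurableSet B)
    (n : ℕ) (S : Finset (Fin n)) :
    Measure.pi (fun _ : Fin n => PX)
      {x | (∀ i, (i ∈ S ↔ x i ∈ F)) ∧
        (∑ i, x i * Set.indicator F (fun _ => (1:ℝ)) (x i)) ∈ A ∧
        (∑ i, x i * Set.indicator Fᶜ (fun _ => (1:ℝ)) (x i)) ∈ B}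
      = shapeVal PX F A S.card * shapeVal PX Fᶜ B (n - S.card) := by
  set C₁ : Set ({i : Fin n // i ∈ S} → ℝ) := {y | (∀ i, y i ∈ F) ∧ (∑ i, y i) ∈ A} with hC₁
  set C₂ : Set ({i : Fin n // ¬ i ∈ S} → ℝ) := {y | (∀ i, y i ∈ Fᶜ) ∧ (∑ i, y i) ∈ B} with hC₂
  set e := MeasurableEquiv.piEquivPiSubtypeProd (fun _ : Fin n => ℝ) (· ∈ S) with he
  have hset : {x : Fin n → ℝ | (∀ i, (i ∈ S ↔ x i ∈ F)) ∧
        (∑ i, x i * Set.indicator F (fun _ => (1:ℝ)) (x i)) ∈ A ∧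
        (∑ i, x i * Set.indicator Fᶜ (fun _ => (1:ℝ)) (x i)) ∈ B}
      = e ⁻¹' (C₁ ×ˢ C₂) := by
    ext x
    simp only [Set.mem_preimage, Set.mem_prod, Set.mem_setOf_eq, he, hC₁, hC₂,
      MeasurableEquiv.piEquivPiSubtypeProd, MeasurableEquiv.coe_mk,
      Equiv.piEquivPiSubtypeProd_apply]
    constructor
    · rintro ⟨hp, hA', hB'⟩
      have hsum1 : (∑ i, x i * Set.indicator F (fun _ => (1:ℝ)) (x i))
          = ∑ i : {i : Fin n // i ∈ S}, x ↑i := by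
        rw [← Finset.sum_subtype S (fun i => Iff.rfl) (fun i => x i)]
        rw [← Finset.sum_subset (Finset.subset_univ S) (fun i _ hi => ?_)]
        · exact Finset.sum_congr rfl fun i hi => by
            rw [Set.indicator_of_mem ((hp i).1 hi), mul_one]
        · rw [Set.indicator_of_notMem (fun hmem => hi ((hp i).2 hmem)), mul_zero]
      have hsum2 : (∑ i, x i * Set.indicator Fᶜ (fun _ => (1:ℝ)) (x i))
          = ∑ i : {i : Fin n // ¬ i ∈ S}, x ↑i := by
        rw [← Finset.sum_subtype Sᶜ (fun i => Finset.mem_compl) (fun i => x i)]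
        rw [← Finset.sum_subset (Finset.subset_univ Sᶜ) (fun i _ hi => ?_)]
        · exact Finset.sum_congr rfl fun i hi => by
            rw [Set.indicator_of_mem (Set.mem_compl fun hmem => (Finset.mem_compl.1 hi) ((hp i).2 hmem)), mul_one]
        · rw [Finset.mem_compl, not_not] at hi
          rw [Set.indicator_of_notMem (fun hmem : x i ∈ Fᶜ => hmem ((hp i).1 hi)), mul_zero]
      exact ⟨⟨fun i => (hp i).1 i.2, by rwa [← hsum1]⟩,
        ⟨fun i => fun hmem => i.2 ((hp i).2 hmem), by rwa [← hsum2]⟩⟩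
    · rintro ⟨⟨h1, h2⟩, ⟨h3, h4⟩⟩
      have hp : ∀ i, (i ∈ S ↔ x i ∈ F) := by
        intro i
        by_cases hi : i ∈ S
        · exact ⟨fun _ => h1 ⟨i, hi⟩, fun _ => hi⟩
        · exact ⟨fun h => absurd h hi, fun hmem => absurd hmem (h3 ⟨i, hi⟩)⟩
      refine ⟨hp, ?_, ?_⟩
      · have hsum1 : (∑ i, x i * Set.indicator F (fun _ => (1:ℝ)) (x i))
            = ∑ i : {i : Fin n // i ∈ S}, x ↑i := by
          rw [← Finset.sum_subtype S (fun i => Iff.rfl) (fun i => x i)]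
          rw [← Finset.sum_subset (Finset.subset_univ S) (fun i _ hi => ?_)]
          · exact Finset.sum_congr rfl fun i hi => by
              rw [Set.indicator_of_mem ((hp i).1 hi), mul_one]
          · rw [Set.indicator_of_notMem (fun hmem => hi ((hp i).2 hmem)), mul_zero]
        rwa [hsum1]
      · have hsum2 : (∑ i, x i * Set.indicator Fᶜ (fun _ => (1:ℝ)) (x i))
            = ∑ i : {i : Fin n // ¬ i ∈ S}, x ↑i := by
          rw [← Finset.sum_subtype Sᶜ (fun i => Finset.mem_compl) (fun i => x i)]
          rw [← Finset.sum_subset (Finset.subset_univ Sᶜ) (fun i _ hi => ?_)]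
          · exact Finset.sum_congr rfl fun i hi => by
              rw [Set.indicator_of_mem (Set.mem_compl fun hmem => (Finset.mem_compl.1 hi) ((hp i).2 hmem)), mul_one]
          · rw [Finset.mem_compl, not_not] at hi
            rw [Set.indicator_of_notMem (fun hmem : x i ∈ Fᶜ => hmem ((hp i).1 hi)), mul_zero]
        rwa [hsum2]
  rw [hset]
  have hC₁m : MeasurableSet C₁ := shape_measurable hF hA _
  have hC₂m : MeasurableSet C₂ := shape_measurable hF.compl hB _
  rw [(measurePreserving_piEquivPiSubtypeProd (fun _ : Fin n => PX) (· ∈ S)).measure_preimage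
    (hC₁m.prod hC₂m).nullMeasurableSet]
  rw [Measure.prod_prod]
  congr 1
  · rw [hC₁]
    convert shapeVal_eq PX F A {i : Fin n // i ∈ S} using 2
    · congr!
    · exact (Fintype.card_coe S).symm
  · rw [hC₂, shapeVal_eq PX Fᶜ B {i : Fin n // ¬ i ∈ S}]
    congr 1
    rw [Fintype.card_subtype_compl, Fintype.card_fin, Fintype.card_coe]

lemma pi_event (PX : Measure ℝ) [IsProbabilityMeasure PX]
    {F A B : Set ℝ} (hF : MeasurableSet F) (hA : MeasurableSet A) (hB : MeasurableSet B)
    (n : ℕ) :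
    Measure.pi (fun _ : Fin n => PX)
      {x | (∑ i, x i * Set.indicator F (fun _ => (1:ℝ)) (x i)) ∈ A ∧
        (∑ i, x i * Set.indicator Fᶜ (fun _ => (1:ℝ)) (x i)) ∈ B}
      = ∑ m ∈ Finset.range (n+1),
          (n.choose m : ℝ≥0∞) * (shapeVal PX F A m * shapeVal PX Fᶜ B (n - m)) := by
  classical
  set E : Set (Fin n → ℝ) := {x | (∑ i, x i * Set.indicator F (fun _ => (1:ℝ)) (x i)) ∈ A ∧
        (∑ i, x i * Set.indicator Fᶜ (fun _ => (1:ℝ)) (x i)) ∈ B} with hE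
  set pat : Finset (Fin n) → Set (Fin n → ℝ) := fun S => {x | ∀ i, (i ∈ S ↔ x i ∈ F)} with hpat
  have hpatm : ∀ S, MeasurableSet (pat S) := by
    intro S
    have : pat S = ⋂ i, (fun x : Fin n → ℝ => x i) ⁻¹' (if i ∈ S then F else Fᶜ) := by
      ext x
      simp only [hpat, Set.mem_setOf_eq, Set.mem_iInter, Set.mem_preimage]
      refine forall_congr' fun i => ?_
      by_cases hi : i ∈ S <;> simp [hi]
    rw [this]
    exact MeasurableSet.iInter fun i =>
      (measurable_pi_apply i) (by split <;> [exact hF; exact hF.compl])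
  have hEm : MeasurableSet E := by
    apply MeasurableSet.inter
    · exact (Finset.measurable_sum Finset.univ fun i _ =>
        (measurable_pi_apply i).mul ((measurable_const.indicator hF).comp
          (measurable_pi_apply i))) hA
    · exact (Finset.measurable_sum Finset.univ fun i _ =>
        (measurable_pi_apply i).mul ((measurable_const.indicator hF.compl).comp
          (measurable_pi_apply i))) hB
  have hpart : E = ⋃ S ∈ (Finset.univ : Finset (Fin n)).powerset, pat S ∩ E := by
    ext x
    simp only [Set.mem_iUnion, Set.mem_inter_iff, exists_prop, Finset.mem_powerset]
    constructor
    · intro hx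
      exact ⟨Finset.univ.filter (fun i => x i ∈ F), Finset.filter_subset _ _,
        fun i => by simp [Finset.mem_filter], hx⟩
    · rintro ⟨S, _, _, hx⟩; exact hx
  rw [hpart, measure_biUnion_finset ?hd (fun S _ => (hpatm S).inter hEm)]
  case hd =>
    intro S _ T hT hST
    refine Set.disjoint_left.2 fun x hxS hxT => hST ?_
    ext i
    exact (hxS.1 i).trans (hxT.1 i).symm
  have hterm : ∀ S : Finset (Fin n),
      Measure.pi (fun _ : Fin n => PX) (pat S ∩ E)
        = shapeVal PX F A S.card * shapeVal PX Fᶜ B (n - S.card) := by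
    intro S
    rw [← subset_piece PX hF hA hB n S]
    congr 1
  calc ∑ S ∈ (Finset.univ : Finset (Fin n)).powerset, Measure.pi (fun _ : Fin n => PX) (pat S ∩ E)
      = ∑ S ∈ (Finset.univ : Finset (Fin n)).powerset,
          shapeVal PX F A S.card * shapeVal PX Fᶜ B (n - S.card) :=
        Finset.sum_congr rfl fun S _ => hterm S
    _ = ∑ m ∈ Finset.range (n+1), ∑ S ∈ Finset.powersetCard m (Finset.univ : Finset (Fin n)),
          shapeVal PX F A S.card * shapeVal PX Fᶜ B (n - S.card) := by
        rw [Finset.sum_powerset]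
        simp [Finset.card_univ]
    _ = ∑ m ∈ Finset.range (n+1),
          (n.choose m : ℝ≥0∞) * (shapeVal PX F A m * shapeVal PX Fᶜ B (n - m)) := by
        refine Finset.sum_congr rfl fun m _ => ?_
        rw [Finset.sum_congr rfl (fun S hS => ?_), Finset.sum_const, Finset.card_powersetCard,
          Finset.card_univ, Fintype.card_fin, nsmul_eq_mul]
        obtain ⟨-, hcard⟩ := Finset.mem_powersetCard.1 hS
        rw [hcard]

lemma map_fin {Ω : Type*} [MeasurableSpace Ω] (μ : Measure Ω) [IsProbabilityMeasure μ]
    (X : ℕ → Ω → ℝ) (PX : Measure ℝ) [IsProbabilityMeasure PX]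
    (hXmeas : ∀ k, Measurable (X k))
    (hXlaw : ∀ k, Measure.map (X k) μ = PX)
    (hXindep : iIndepFun X μ) (n : ℕ) :
    Measure.map (fun ω (i : Fin n) => X i ω) μ = Measure.pi (fun _ : Fin n => PX) := by
  classical
  refine (Measure.pi_eq (μ := fun _ : Fin n => PX) fun s hs => ?_).symm
  rw [Measure.map_apply (f := fun ω (i : Fin n) => X i ω)
    (measurable_pi_lambda _ fun i : Fin n => hXmeas i.val) (MeasurableSet.univ_pi hs)]
  set s' : ℕ → Set ℝ := fun k => if h : k < n then s ⟨k, h⟩ else Set.univ with hs'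
  have hpre : (fun ω (i : Fin n) => X i ω) ⁻¹' (Set.univ.pi s)
      = ⋂ k ∈ Finset.range n, X k ⁻¹' (s' k) := by
    ext ω
    simp only [Set.mem_preimage, Set.mem_pi, Set.mem_univ, forall_true_left, Set.mem_iInter,
      Finset.mem_range, hs']
    constructor
    · intro h k hk
      simpa [dif_pos hk] using h ⟨k, hk⟩
    · intro h i
      simpa [dif_pos i.isLt] using h i.val i.isLt
  rw [hpre, hXindep.measure_inter_preimage_eq_mul (Finset.range n)
    (sets := s') (fun k hk => by
      simp only [hs']
      split
      · exact hs _
      · exact MeasurableSet.univ)]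
  rw [← Fin.prod_univ_eq_prod_range (fun k => μ (X k ⁻¹' s' k)) n]
  refine Finset.prod_congr rfl fun i _ => ?_
  rw [← hXlaw i, Measure.map_apply (hXmeas i)]
  · congr 1
    simp [hs', i.isLt]
  · exact hs i

lemma tsum_antidiag (h : ℕ × ℕ → ℝ≥0∞) :
    ∑' n : ℕ, ∑ p ∈ Finset.HasAntidiagonal.antidiagonal n, h p = ∑' p : ℕ × ℕ, h p := by
  rw [← Finset.HasAntidiagonal.sigmaAntidiagonalEquivProd.tsum_eq h, ENNReal.tsum_sigma']
  refine tsum_congr fun n => ?_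
  rw [tsum_fintype, ← Finset.sum_coe_sort (Finset.HasAntidiagonal.antidiagonal n) h]
  exact Finset.sum_congr rfl fun b _ => rfl

lemma choose_split (r : NNReal) (m j : ℕ) :
    ENNReal.ofReal (rexp (-(r:ℝ)) * (r:ℝ)^(m+j) / (m+j).factorial) * ((m+j).choose m : ℝ≥0∞)
      = ENNReal.ofReal (rexp (-(r:ℝ)) * (r:ℝ)^m / m.factorial)
        * ENNReal.ofReal ((r:ℝ)^j / j.factorial) := by
  have hkey : ((m+j).choose m * m.factorial * j.factorial : ℝ) = (m+j).factorial := by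
    exact_mod_cast by
      rw [Nat.choose_symm_add]
      exact Nat.add_choose_mul_factorial_mul_factorial m j
  have hme : (m.factorial : ℝ) ≠ 0 := Nat.cast_ne_zero.2 m.factorial_ne_zero
  have hje : (j.factorial : ℝ) ≠ 0 := Nat.cast_ne_zero.2 j.factorial_ne_zero
  have hmje : ((m+j).factorial : ℝ) ≠ 0 := Nat.cast_ne_zero.2 (m+j).factorial_ne_zero
  rw [← ENNReal.ofReal_natCast, ← ENNReal.ofReal_mul (by positivity),
    ← ENNReal.ofReal_mul (by positivity)]
  congr 1
  rw [pow_add]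
  field_simp
  linear_combination ((r:ℝ)^m * (r:ℝ)^j) * hkey
lemma event_meas {F A B : Set ℝ} (hF : MeasurableSet F) (hA : MeasurableSet A)
    (hB : MeasurableSet B) (n : ℕ) :
    MeasurableSet {x : Fin n → ℝ | (∑ i, x i * Set.indicator F (fun _ => (1:ℝ)) (x i)) ∈ A ∧
        (∑ i, x i * Set.indicator Fᶜ (fun _ => (1:ℝ)) (x i)) ∈ B} := by
  apply MeasurableSet.inter
  · exact (Finset.measurable_sum Finset.univ fun i _ =>
      (measurable_pi_apply i).mul ((measurable_const.indicator hF).comp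
        (measurable_pi_apply i))) hA
  · exact (Finset.measurable_sum Finset.univ fun i _ =>
      (measurable_pi_apply i).mul ((measurable_const.indicator hF.compl).comp
        (measurable_pi_apply i))) hB

lemma master {Ω : Type*} [MeasurableSpace Ω] (μ : Measure Ω) [IsProbabilityMeasure μ]
    (X : ℕ → Ω → ℝ) (PX : Measure ℝ) [IsProbabilityMeasure PX]
    (hXmeas : ∀ k, Measurable (X k))
    (hXlaw : ∀ k, Measure.map (X k) μ = PX)
    (hXindep : iIndepFun X μ)
    (M : Ω → ℕ) (hMmeas : Measurable M) (r : NNReal)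
    (hMlaw : Measure.map M μ = poissonMeasure r)
    (hMX : IndepFun M (fun ω k => X k ω) μ)
    (F : Set ℝ) (hF : MeasurableSet F)
    {A B : Set ℝ} (hA : MeasurableSet A) (hB : MeasurableSet B) :
    μ ((fun ω => ∑ k ∈ Finset.range (M ω), X k ω * Set.indicator F (fun _ => (1:ℝ)) (X k ω)) ⁻¹' A
        ∩ (fun ω => ∑ k ∈ Finset.range (M ω),
            X k ω * Set.indicator Fᶜ (fun _ => (1:ℝ)) (X k ω)) ⁻¹' B)
      = (∑' m : ℕ, ENNReal.ofReal (rexp (-(r:ℝ)) * (r:ℝ)^m / m.factorial) * shapeVal PX F A m)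
        * (∑' j : ℕ, ENNReal.ofReal ((r:ℝ)^j / j.factorial) * shapeVal PX Fᶜ B j) := by
  classical
  set En : (n : ℕ) → Set (Fin n → ℝ) := fun n =>
    {x | (∑ i, x i * Set.indicator F (fun _ => (1:ℝ)) (x i)) ∈ A ∧
      (∑ i, x i * Set.indicator Fᶜ (fun _ => (1:ℝ)) (x i)) ∈ B} with hEn
  have hEm : ∀ n, MeasurableSet (En n) := fun n => event_meas hF hA hB n
  have hvecm : ∀ n : ℕ, Measurable (fun ω (i : Fin n) => X i ω) :=
    fun n => measurable_pi_lambda _ fun i => hXmeas i.val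
  have hsplit : ((fun ω => ∑ k ∈ Finset.range (M ω),
          X k ω * Set.indicator F (fun _ => (1:ℝ)) (X k ω)) ⁻¹' A
        ∩ (fun ω => ∑ k ∈ Finset.range (M ω),
            X k ω * Set.indicator Fᶜ (fun _ => (1:ℝ)) (X k ω)) ⁻¹' B)
      = ⋃ n : ℕ, (M ⁻¹' {n} ∩ (fun ω (i : Fin n) => X i ω) ⁻¹' En n) := by
    ext ω
    simp only [Set.mem_inter_iff, Set.mem_preimage, Set.mem_iUnion, Set.mem_singleton_iff, hEn,
      Set.mem_setOf_eq]
    constructor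
    · rintro ⟨hA', hB'⟩
      refine ⟨M ω, rfl, ?_, ?_⟩
      · rwa [Fin.sum_univ_eq_sum_range (fun k => X k ω * Set.indicator F (fun _ => (1:ℝ)) (X k ω))]
      · rwa [Fin.sum_univ_eq_sum_range
          (fun k => X k ω * Set.indicator Fᶜ (fun _ => (1:ℝ)) (X k ω))]
    · rintro ⟨n, hn, hA', hB'⟩
      subst hn
      rw [Fin.sum_univ_eq_sum_range (fun k => X k ω * Set.indicator F (fun _ => (1:ℝ)) (X k ω))]
        at hA'
      rw [Fin.sum_univ_eq_sum_range
        (fun k => X k ω * Set.indicator Fᶜ (fun _ => (1:ℝ)) (X k ω))] at hB'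
      exact ⟨hA', hB'⟩
  rw [hsplit, measure_iUnion ?hd
    (fun n => (hMmeas (measurableSet_singleton n)).inter ((hvecm n) (hEm n)))]
  case hd =>
    intro n m hnm
    refine Set.disjoint_left.2 fun ω hω hω' => hnm ?_
    rw [← hω.1, ← hω'.1]
  have hterm : ∀ n : ℕ, μ (M ⁻¹' {n} ∩ (fun ω (i : Fin n) => X i ω) ⁻¹' En n)
      = ENNReal.ofReal (poissonPMFReal r n)
        * ∑ m ∈ Finset.range (n+1),
            (n.choose m : ℝ≥0∞) * (shapeVal PX F A m * shapeVal PX Fᶜ B (n - m)) := by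
    intro n
    have hcomp : (fun ω (i : Fin n) => X i ω)
        = (fun (v : ℕ → ℝ) (i : Fin n) => v i) ∘ (fun ω k => X k ω) := rfl
    have hprojm : Measurable (fun (v : ℕ → ℝ) (i : Fin n) => v i) :=
      measurable_pi_lambda _ fun i => measurable_pi_apply i.val
    rw [hcomp, Set.preimage_comp]
    rw [hMX.measure_inter_preimage_eq_mul _ _ (measurableSet_singleton n) (hprojm (hEm n))]
    congr 1
    · rw [← Measure.map_apply hMmeas (measurableSet_singleton n), hMlaw, poissonMeasure,
        Measure.sum_apply _ (measurableSet_singleton n), tsum_eq_single n]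
      · simp [poissonPMFReal]
      · intro k hk
        simp [Measure.dirac_apply', hk]
    · rw [← Set.preimage_comp, ← hcomp,
        ← Measure.map_apply (hvecm n) (hEm n),
        map_fin μ X PX hXmeas hXlaw hXindep n]
      exact pi_event PX hF hA hB n
  simp_rw [hterm]
  set h : ℕ × ℕ → ℝ≥0∞ := fun p =>
    (ENNReal.ofReal (rexp (-(r:ℝ)) * (r:ℝ)^p.1 / p.1.factorial) * shapeVal PX F A p.1)
      * (ENNReal.ofReal ((r:ℝ)^p.2 / p.2.factorial) * shapeVal PX Fᶜ B p.2) with hh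
  have hsum : ∀ n : ℕ, ENNReal.ofReal (poissonPMFReal r n)
      * ∑ m ∈ Finset.range (n+1),
          (n.choose m : ℝ≥0∞) * (shapeVal PX F A m * shapeVal PX Fᶜ B (n - m))
      = ∑ p ∈ Finset.HasAntidiagonal.antidiagonal n, h p := by
    intro n
    rw [Finset.Nat.sum_antidiagonal_eq_sum_range_succ_mk, Finset.mul_sum]
    refine Finset.sum_congr rfl fun m hm => ?_
    have hmn : m ≤ n := Nat.lt_succ_iff.1 (Finset.mem_range.1 hm)
    obtain ⟨j, rfl⟩ : ∃ j, n = m + j := ⟨n - m, (Nat.add_sub_cancel' hmn).symm⟩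
    have hj : m + j - m = j := by omega
    rw [hj, hh]
    simp only [poissonPMFReal]
    calc ENNReal.ofReal (rexp (-(r:ℝ)) * (r:ℝ)^(m+j) / (m+j).factorial)
          * (((m+j).choose m : ℝ≥0∞) * (shapeVal PX F A m * shapeVal PX Fᶜ B j))
        = (ENNReal.ofReal (rexp (-(r:ℝ)) * (r:ℝ)^(m+j) / (m+j).factorial)
            * ((m+j).choose m : ℝ≥0∞)) * shapeVal PX F A m * shapeVal PX Fᶜ B j := by ring
      _ = (ENNReal.ofReal (rexp (-(r:ℝ)) * (r:ℝ)^m / m.factorial)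
            * ENNReal.ofReal ((r:ℝ)^j / j.factorial)) * shapeVal PX F A m
            * shapeVal PX Fᶜ B j := by rw [choose_split]
      _ = (ENNReal.ofReal (rexp (-(r:ℝ)) * (r:ℝ)^m / m.factorial) * shapeVal PX F A m)
            * (ENNReal.ofReal ((r:ℝ)^j / j.factorial) * shapeVal PX Fᶜ B j) := by ring
  simp_rw [hsum]
  rw [tsum_antidiag h]
  calc ∑' p : ℕ × ℕ, h p
      = ∑' m : ℕ, ∑' j : ℕ, h (m, j) := ENNReal.tsum_prod'
    _ = ∑' m : ℕ, (ENNReal.ofReal (rexp (-(r:ℝ)) * (r:ℝ)^m / m.factorial) * shapeVal PX F A m)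
          * ∑' j : ℕ, (ENNReal.ofReal ((r:ℝ)^j / j.factorial) * shapeVal PX Fᶜ B j) := by
        refine tsum_congr fun m => ?_
        rw [← ENNReal.tsum_mul_left]
    _ = _ := ENNReal.tsum_mul_right

lemma final_alg {SA Su TB Tu : ℝ≥0∞} (h4 : (1:ℝ≥0∞) = Su * Tu) :
    SA * TB = (SA * Tu) * (Su * TB) := by
  calc SA * TB = (SA * TB) * (Su * Tu) := by rw [← h4, mul_one]
    _ = (SA * Tu) * (Su * TB) := by ring

end PoissonThinning

/-- Thinning property of a Poisson random sum: if `X₁, X₂, …` are i.i.d. real random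
variables, `M ∼ Poisson(r)` is independent of the sequence, and `F` is a measurable set,
then `U = ∑_{k<M} X_k 1{X_k ∈ F}` and `V = ∑_{k<M} X_k 1{X_k ∉ F}` are independent. -/
theorem stmt5 {Ω : Type*} [MeasurableSpace Ω] (μ : Measure Ω) [IsProbabilityMeasure μ]
    (X : ℕ → Ω → ℝ) (PX : Measure ℝ) [IsProbabilityMeasure PX]
    (hXmeas : ∀ k, Measurable (X k))
    (hXlaw : ∀ k, Measure.map (X k) μ = PX)
    (hXindep : iIndepFun X μ)
    (M : Ω → ℕ) (hMmeas : Measurable M) (r : NNReal)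
    (hMlaw : Measure.map M μ = poissonMeasure r)
    (hMX : IndepFun M (fun ω k => X k ω) μ)
    (F : Set ℝ) (hF : MeasurableSet F) :
    IndepFun
      (fun ω => ∑ k ∈ Finset.range (M ω), X k ω * Set.indicator F (fun _ => (1:ℝ)) (X k ω))
      (fun ω => ∑ k ∈ Finset.range (M ω), X k ω * Set.indicator Fᶜ (fun _ => (1:ℝ)) (X k ω))
      μ := by
  rw [indepFun_iff_measure_inter_preimage_eq_mul]
  intro A B hA hB
  have hm := fun {A B : Set ℝ} (hA : MeasurableSet A) (hB : MeasurableSet B) =>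
    PoissonThinning.master μ X PX hXmeas hXlaw hXindep M hMmeas r hMlaw hMX F hF hA hB
  have h1 := hm hA hB
  have h2 := hm hA (MeasurableSet.univ (α := ℝ))
  have h3 := hm (MeasurableSet.univ (α := ℝ)) hB
  have h4 := hm (MeasurableSet.univ (α := ℝ)) (MeasurableSet.univ (α := ℝ))
  simp only [Set.preimage_univ, Set.inter_univ, Set.univ_inter] at h2 h3 h4
  rw [measure_univ] at h4
  rw [h1, h2, h3]
  exact PoissonThinning.final_alg h4
end

section
/- Let P_{XY} be a joint law on X×Y with information density ι(x;y), and define F(ρ) = E[ (E[exp((ρ/(1−ρ))·ι(X;Y)) | Y])^{1−ρ} ] for ρ ∈ [0,1), where (X,Y) ∼ P_{XY}. Then G(ρ) = log F(ρ) is a convex function of ρ on [0,1). -/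
open MeasureTheory ProbabilityTheory Real
open scoped ENNReal NNReal

section Aux

variable {α β : Type*} [MeasurableSpace α] [MeasurableSpace β]

/-- Weighted AM-GM based integrability of the Hölder product. -/
lemma hoelder_integrable {Ω : Type*} [MeasurableSpace Ω] (μ : Measure Ω) {f g : Ω → ℝ}
    (hf0 : ∀ ω, 0 ≤ f ω) (hg0 : ∀ ω, 0 ≤ g ω) {l : ℝ} (hl0 : 0 ≤ l) (hl1 : l ≤ 1)
    (hf : Integrable f μ) (hg : Integrable g μ) :
    Integrable (fun ω => f ω ^ l * g ω ^ (1 - l)) μ := by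
  have hmeas : AEStronglyMeasurable (fun ω => f ω ^ l * g ω ^ (1 - l)) μ := by
    have h1 : AEMeasurable f μ := hf.aemeasurable
    have h2 : AEMeasurable g μ := hg.aemeasurable
    exact ((h1.pow_const l).mul (h2.pow_const (1 - l))).aestronglyMeasurable
  refine Integrable.mono ((hf.const_mul l).add (hg.const_mul (1 - l))) hmeas ?_
  filter_upwards with ω
  have hge : (0:ℝ) ≤ f ω ^ l * g ω ^ (1 - l) :=
    mul_nonneg (Real.rpow_nonneg (hf0 ω) _) (Real.rpow_nonneg (hg0 ω) _)
  have hamgm : f ω ^ l * g ω ^ (1 - l) ≤ l * f ω + (1 - l) * g ω :=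
    Real.geom_mean_le_arith_mean2_weighted hl0 (by linarith) (hf0 ω) (hg0 ω) (by ring)
  have hnn : (0:ℝ) ≤ l * f ω + (1 - l) * g ω :=
    add_nonneg (mul_nonneg hl0 (hf0 ω)) (mul_nonneg (by linarith) (hg0 ω))
  simp only [Pi.add_apply]
  rw [Real.norm_of_nonneg hge, Real.norm_of_nonneg hnn]
  exact hamgm

/-- Hölder's inequality in the interpolation form. -/
lemma hoelder_interp {Ω : Type*} [MeasurableSpace Ω] (μ : Measure Ω) {f g : Ω → ℝ}
    (hf0 : ∀ ω, 0 ≤ f ω) (hg0 : ∀ ω, 0 ≤ g ω) {l : ℝ} (hl0 : 0 < l) (hl1 : l < 1)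
    (hf : Integrable f μ) (hg : Integrable g μ) :
    ∫ ω, f ω ^ l * g ω ^ (1 - l) ∂μ ≤ (∫ ω, f ω ∂μ) ^ l * (∫ ω, g ω ∂μ) ^ (1 - l) := by
  have hl1' : (0:ℝ) < 1 - l := by linarith
  have hpq : (1 / l).HolderConjugate (1 / (1 - l)) := by
    constructor
    · simp only [one_div, inv_inv, inv_one]; ring
    · exact one_div_pos.2 hl0
    · exact one_div_pos.2 hl1'
  have hfL : MemLp (fun ω => f ω ^ l) (ENNReal.ofReal (1 / l)) μ := by
    have h := (memLp_one_iff_integrable.2 hf).norm_rpow_div (ENNReal.ofReal l)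
    have he : (1 : ℝ≥0∞) / ENNReal.ofReal l = ENNReal.ofReal (1 / l) := by
      rw [one_div, one_div, ← ENNReal.ofReal_inv_of_pos hl0]
    have heq : (fun ω => ‖f ω‖ ^ (ENNReal.ofReal l).toReal) = fun ω => f ω ^ l := by
      funext ω; rw [ENNReal.toReal_ofReal hl0.le, Real.norm_of_nonneg (hf0 ω)]
    rw [he, heq] at h
    exact h
  have hgL : MemLp (fun ω => g ω ^ (1 - l)) (ENNReal.ofReal (1 / (1 - l))) μ := by
    have h := (memLp_one_iff_integrable.2 hg).norm_rpow_div (ENNReal.ofReal (1 - l))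
    have he : (1 : ℝ≥0∞) / ENNReal.ofReal (1 - l) = ENNReal.ofReal (1 / (1 - l)) := by
      rw [one_div, one_div, ← ENNReal.ofReal_inv_of_pos hl1']
    have heq : (fun ω => ‖g ω‖ ^ (ENNReal.ofReal (1 - l)).toReal) = fun ω => g ω ^ (1 - l) := by
      funext ω; rw [ENNReal.toReal_ofReal hl1'.le, Real.norm_of_nonneg (hg0 ω)]
    rw [he, heq] at h
    exact h
  have key := integral_mul_le_Lp_mul_Lq_of_nonneg hpq
    (Filter.Eventually.of_forall fun ω => Real.rpow_nonneg (hf0 ω) l)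
    (Filter.Eventually.of_forall fun ω => Real.rpow_nonneg (hg0 ω) (1 - l)) hfL hgL
  have e1 : ∀ ω, (f ω ^ l) ^ (1 / l) = f ω := by
    intro ω
    rw [← Real.rpow_mul (hf0 ω), mul_one_div_cancel hl0.ne', Real.rpow_one]
  have e2 : ∀ ω, (g ω ^ (1 - l)) ^ (1 / (1 - l)) = g ω := by
    intro ω
    rw [← Real.rpow_mul (hg0 ω), mul_one_div_cancel hl1'.ne', Real.rpow_one]
  simp only [e1, e2, one_div_one_div] at key
  exact key

/-- The inner conditional expectation `A ρ y`. -/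
noncomputable def innerA (κ : ProbabilityTheory.Kernel β α) (ι : α → β → ℝ) (ρ : ℝ) (y : β) : ℝ :=
  ∫ x, Real.exp ((ρ / (1 - ρ)) * ι x y) ∂(κ y)

/-- The function `F ρ`. -/
noncomputable def funF (PY : Measure β) (κ : ProbabilityTheory.Kernel β α) (ι : α → β → ℝ)
    (ρ : ℝ) : ℝ :=
  ∫ y, innerA κ ι ρ y ^ (1 - ρ) ∂PY

lemma innerA_nonneg (κ : ProbabilityTheory.Kernel β α) (ι : α → β → ℝ) (ρ : ℝ) (y : β) :
    0 ≤ innerA κ ι ρ y :=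
  integral_nonneg fun x => (Real.exp_pos _).le

/-- The main multiplicative inequality `F (t p + u q) ≤ F p ^ t * F q ^ u`, by two applications
of Hölder's inequality. -/
lemma funF_mul_le (PY : Measure β) [IsProbabilityMeasure PY]
    (κ : ProbabilityTheory.Kernel β α) [IsMarkovKernel κ] (ι : α → β → ℝ)
    {p q t u : ℝ} (hp : p ∈ Set.Ico (0:ℝ) 1) (hq : q ∈ Set.Ico (0:ℝ) 1)
    (ht : 0 < t) (hu : 0 < u) (htu : t + u = 1)
    (hintp : ∀ᵐ y ∂PY, Integrable (fun x => Real.exp ((p / (1 - p)) * ι x y)) (κ y))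
    (hintq : ∀ᵐ y ∂PY, Integrable (fun x => Real.exp ((q / (1 - q)) * ι x y)) (κ y))
    (hintr : Integrable
      (fun y => innerA κ ι (t * p + u * q) y ^ (1 - (t * p + u * q))) PY)
    (hFp : Integrable (fun y => innerA κ ι p y ^ (1 - p)) PY)
    (hFq : Integrable (fun y => innerA κ ι q y ^ (1 - q)) PY) :
    funF PY κ ι (t * p + u * q) ≤ funF PY κ ι p ^ t * funF PY κ ι q ^ u := by
  set r := t * p + u * q with hrdef
  have hp1 : (0:ℝ) < 1 - p := by linarith [hp.2]
  have hq1 : (0:ℝ) < 1 - q := by linarith [hq.2]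
  have hsum : 1 - r = t * (1 - p) + u * (1 - q) := by
    rw [hrdef]; linear_combination -htu
  have hr1 : (0:ℝ) < 1 - r := by
    rw [hsum]; positivity
  set l := t * (1 - p) / (1 - r) with hldef
  have hl0 : 0 < l := div_pos (mul_pos ht hp1) hr1
  have hl1 : l < 1 := by
    rw [hldef, div_lt_one hr1, hsum]
    nlinarith [mul_pos hu hq1]
  have h1l : 1 - l = u * (1 - q) / (1 - r) := by
    have hadd : l + u * (1 - q) / (1 - r) = 1 := by
      rw [hldef, ← add_div, ← hsum, div_self hr1.ne']
    linarith
  -- pointwise exponent identity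
  have hexp : ∀ x y, Real.exp ((r / (1 - r)) * ι x y) =
      (Real.exp ((p / (1 - p)) * ι x y)) ^ l * (Real.exp ((q / (1 - q)) * ι x y)) ^ (1 - l) := by
    intro x y
    rw [← Real.exp_mul, ← Real.exp_mul, ← Real.exp_add]
    congr 1
    have hid : l * (p / (1 - p)) + (1 - l) * (q / (1 - q)) = r / (1 - r) := by
      have ea : l * (p / (1 - p)) = t * p / (1 - r) := by
        rw [hldef]; field_simp
      have eb : (1 - l) * (q / (1 - q)) = u * q / (1 - r) := by
        rw [h1l]; field_simp
      rw [ea, eb, ← add_div, ← hrdef]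
    linear_combination (-(ι x y)) * hid
  -- inner inequality, a.e. in y
  have hinner : ∀ᵐ y ∂PY,
      innerA κ ι r y ^ (1 - r) ≤ (innerA κ ι p y ^ (1 - p)) ^ t * (innerA κ ι q y ^ (1 - q)) ^ u := by
    filter_upwards [hintp, hintq] with y hyp hyq
    have h1 : innerA κ ι r y ≤ innerA κ ι p y ^ l * innerA κ ι q y ^ (1 - l) := by
      have hH := hoelder_interp (κ y) (f := fun x => Real.exp ((p / (1 - p)) * ι x y))
        (g := fun x => Real.exp ((q / (1 - q)) * ι x y))
        (fun x => (Real.exp_pos _).le) (fun x => (Real.exp_pos _).le) hl0 hl1 hyp hyq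
      calc innerA κ ι r y
          = ∫ x, (Real.exp ((p / (1 - p)) * ι x y)) ^ l *
              (Real.exp ((q / (1 - q)) * ι x y)) ^ (1 - l) ∂(κ y) := by
            rw [innerA]
            exact integral_congr_ae (Filter.Eventually.of_forall fun x => hexp x y)
        _ ≤ _ := hH
    have h2 : innerA κ ι r y ^ (1 - r) ≤
        (innerA κ ι p y ^ l * innerA κ ι q y ^ (1 - l)) ^ (1 - r) :=
      Real.rpow_le_rpow (innerA_nonneg κ ι r y) h1 hr1.le
    refine h2.trans_eq ?_
    have hAp := innerA_nonneg κ ι p y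
    have hAq := innerA_nonneg κ ι q y
    rw [Real.mul_rpow (Real.rpow_nonneg hAp _) (Real.rpow_nonneg hAq _),
      ← Real.rpow_mul hAp, ← Real.rpow_mul hAq]
    have e1 : l * (1 - r) = (1 - p) * t := by
      rw [hldef, div_mul_cancel₀ _ hr1.ne']; ring
    have e2 : (1 - l) * (1 - r) = (1 - q) * u := by
      rw [h1l, div_mul_cancel₀ _ hr1.ne']; ring
    rw [e1, e2, Real.rpow_mul hAp, Real.rpow_mul hAq]
  -- outer inequality
  have hRHSint : Integrable
      (fun y => (innerA κ ι p y ^ (1 - p)) ^ t * (innerA κ ι q y ^ (1 - q)) ^ u) PY := by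
    have := hoelder_integrable PY (f := fun y => innerA κ ι p y ^ (1 - p))
      (g := fun y => innerA κ ι q y ^ (1 - q))
      (fun y => Real.rpow_nonneg (innerA_nonneg κ ι p y) _)
      (fun y => Real.rpow_nonneg (innerA_nonneg κ ι q y) _) ht.le (by linarith) hFp hFq
    have hu' : u = 1 - t := by linarith
    rw [hu']; exact this
  have houter : funF PY κ ι r ≤
      ∫ y, (innerA κ ι p y ^ (1 - p)) ^ t * (innerA κ ι q y ^ (1 - q)) ^ u ∂PY :=
    integral_mono_ae hintr hRHSint hinner
  have hH2 : ∫ y, (innerA κ ι p y ^ (1 - p)) ^ t * (innerA κ ι q y ^ (1 - q)) ^ u ∂PY ≤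
      funF PY κ ι p ^ t * funF PY κ ι q ^ u := by
    have := hoelder_interp PY (f := fun y => innerA κ ι p y ^ (1 - p))
      (g := fun y => innerA κ ι q y ^ (1 - q))
      (fun y => Real.rpow_nonneg (innerA_nonneg κ ι p y) _)
      (fun y => Real.rpow_nonneg (innerA_nonneg κ ι q y) _) ht (by linarith) hFp hFq
    have hu' : u = 1 - t := by linarith
    rw [hu']; exact this
  exact houter.trans hH2

end Aux

/-- Convexity of `ρ ↦ G(ρ) = log F(ρ)` where
`F(ρ) = E[(E[exp((ρ/(1−ρ)) ι(X;Y)) | Y])^{1−ρ}]`, `(X,Y) ∼ P_{XY}`, `ι` is the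
information density, and the conditional expectation given `Y` is realized by a
disintegration kernel `κ` of `P_{XY}` over its `Y`-marginal. -/
theorem stmt11 {α β : Type*} [MeasurableSpace α] [MeasurableSpace β]
    (PX : Measure α) [IsProbabilityMeasure PX] (PY : Measure β) [IsProbabilityMeasure PY]
    (PXY : Measure (α × β)) [IsProbabilityMeasure PXY]
    (hfst : PXY.map Prod.fst = PX) (hsnd : PXY.map Prod.snd = PY)
    (hac : PXY ≪ PX.prod PY)
    (ι : α → β → ℝ) (hιmeas : Measurable (Function.uncurry ι))
    (hι : ∀ᵐ z ∂(PX.prod PY),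
      Real.exp (ι z.1 z.2) = (PXY.rnDeriv (PX.prod PY) z).toReal)
    (κ : ProbabilityTheory.Kernel β α) [IsMarkovKernel κ]
    (hκ : PXY = (PY.compProd κ).map Prod.swap)
    (hint : ∀ ρ ∈ Set.Ico (0:ℝ) 1,
      (∀ᵐ y ∂PY, Integrable (fun x => Real.exp ((ρ / (1 - ρ)) * ι x y)) (κ y)) ∧
        Integrable
          (fun y => (∫ x, Real.exp ((ρ / (1 - ρ)) * ι x y) ∂(κ y)) ^ (1 - ρ)) PY) :
    ConvexOn ℝ (Set.Ico (0:ℝ) 1)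
      (fun ρ => Real.log
        (∫ y, (∫ x, Real.exp ((ρ / (1 - ρ)) * ι x y) ∂(κ y)) ^ (1 - ρ) ∂PY)) := by
  show ConvexOn ℝ (Set.Ico (0:ℝ) 1) (fun ρ => Real.log (funF PY κ ι ρ))
  -- positivity of the inner integral, a.e.
  have hApos : ∀ ρ ∈ Set.Ico (0:ℝ) 1, ∀ᵐ y ∂PY, 0 < innerA κ ι ρ y := by
    intro ρ hρ
    filter_upwards [(hint ρ hρ).1] with y hy
    rw [innerA, integral_pos_iff_support_of_nonneg (fun x => (Real.exp_pos _).le) hy]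
    have hsupp : Function.support (fun x => Real.exp ((ρ / (1 - ρ)) * ι x y)) = Set.univ := by
      ext x; simp [Function.mem_support, (Real.exp_pos _).ne']
    rw [hsupp]
    simp
  -- positivity of F
  have hFpos : ∀ ρ ∈ Set.Ico (0:ℝ) 1, 0 < funF PY κ ι ρ := by
    intro ρ hρ
    have hnn : 0 ≤ᵐ[PY] fun y => innerA κ ι ρ y ^ (1 - ρ) :=
      Filter.Eventually.of_forall fun y => Real.rpow_nonneg (innerA_nonneg κ ι ρ y) _
    rw [funF, integral_pos_iff_support_of_nonneg_ae hnn (hint ρ hρ).2]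
    set s := Function.support fun y => innerA κ ι ρ y ^ (1 - ρ) with hs
    have hmem : ∀ᵐ y ∂PY, y ∈ s := by
      filter_upwards [hApos ρ hρ] with y hy
      simp only [hs, Function.mem_support]
      exact (Real.rpow_pos_of_pos hy _).ne'
    have hcompl : PY sᶜ = 0 := by
      have := ae_iff.1 hmem
      simpa [Set.compl_def] using this
    have : (1:ℝ≥0∞) ≤ PY s := by
      calc (1:ℝ≥0∞) = PY Set.univ := measure_univ.symm
        _ = PY (s ∪ sᶜ) := by rw [Set.union_compl_self]
        _ ≤ PY s + PY sᶜ := measure_union_le _ _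
        _ = PY s := by rw [hcompl, add_zero]
    exact lt_of_lt_of_le (by norm_num) this
  refine ⟨convex_Ico 0 1, ?_⟩
  intro p hp q hq t u ht hu htu
  simp only [smul_eq_mul]
  rcases eq_or_lt_of_le ht with ht0 | ht0
  · have hu1 : u = 1 := by linarith
    simp [← ht0, hu1]
  rcases eq_or_lt_of_le hu with hu0 | hu0
  · have ht1 : t = 1 := by linarith
    simp [← hu0, ht1]
  have hr : t * p + u * q ∈ Set.Ico (0:ℝ) 1 := by
    have := (convex_Ico (0:ℝ) 1) hp hq ht hu htu
    simpa using this
  have hkey := funF_mul_le PY κ ι hp hq ht0 hu0 htu (hint p hp).1 (hint q hq).1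
    ((hint _ hr).2) ((hint p hp).2) ((hint q hq).2)
  calc Real.log (funF PY κ ι (t * p + u * q)) ≤
      Real.log (funF PY κ ι p ^ t * funF PY κ ι q ^ u) :=
        Real.log_le_log (hFpos _ hr) hkey
    _ = t * Real.log (funF PY κ ι p) + u * Real.log (funF PY κ ι q) := by
        rw [Real.log_mul (Real.rpow_pos_of_pos (hFpos p hp) t).ne'
          (Real.rpow_pos_of_pos (hFpos q hq) u).ne',
          Real.log_rpow (hFpos p hp), Real.log_rpow (hFpos q hq)]
end

section
/- Let (X,Y) ∼ P_X × P_Y with information density ι of a joint law P_{XY}, let λ ∈ [0,1], M ≥ 1, and define κ_λ(y) = (M·E[exp(λ·ι(X;Y))|Y=y])^{1/(1+λ)} and F = {(x,y) : exp(ι(x;y)) ≤ κ_λ(y)}. Then for each y, both P[(X,y) ∉ F] and sqrt(M^{−1}·E[exp(ι(X;Y))·1{(X,Y)∈F}|Y=y]) are bounded above by M^{−λ/(1+λ)}·(E[exp(λ·ι(X;Y))|Y=y])^{1/(1+λ)}. -/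
/-!
Write `E = E[exp(λ ι(X;y))]`. The threshold satisfies `κ^(1+λ) = M E`, and the common bound
`M^(-λ/(1+λ)) E^(1/(1+λ))` is just `κ / M`. Markov's inequality for `exp(λ ι)` at level `κ^λ` gives
`P[exp ι > κ] ≤ E / κ^λ = κ / M`. On `F`, `exp ι = exp((1-λ) ι) exp(λ ι) ≤ κ^(1-λ) exp(λ ι)`,
so `M⁻¹ E[exp ι 1_F] ≤ M⁻¹ κ^(1-λ) E = (κ / M)^2`.
-/

open MeasureTheory Real

section

variable {α : Type*} [MeasurableSpace α] {μ : Measure α} {s : α → ℝ} {a κ M E x : ℝ}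

theorem rpow_one_div_one_add_rpow (hx : 0 ≤ x) (ha : 1 + a ≠ 0) :
    (x ^ (1 / (1 + a))) ^ (1 + a) = x := by
  rw [one_div, rpow_inv_rpow hx ha]

theorem rpow_neg_div_mul_rpow_one_div (hM : 0 < M) (hE : 0 ≤ E) (ha : 1 + a ≠ 0) :
    M ^ (-(a / (1 + a))) * E ^ (1 / (1 + a)) = (M * E) ^ (1 / (1 + a)) / M := by
  rw [mul_rpow hM.le hE, mul_div_right_comm, ← rpow_sub_one hM.ne']
  congr 2
  field_simp
  ring

theorem div_rpow_eq_div (hκ : 0 < κ) (hM : M ≠ 0) (h : κ ^ (1 + a) = M * E) :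
    E / κ ^ a = κ / M := by
  rw [div_eq_div_iff (rpow_pos_of_pos hκ a).ne' hM, mul_comm κ, ← rpow_add_one hκ.ne', add_comm, h]
  ring

theorem inv_mul_rpow_mul_eq_sq (hκ : 0 < κ) (hM : M ≠ 0) (h : κ ^ (1 + a) = M * E) :
    M⁻¹ * (κ ^ (1 - a) * E) = (κ / M) ^ 2 := by
  have hsq : κ ^ (1 - a) * κ ^ (1 + a) = κ ^ 2 := by
    rw [← rpow_add hκ, ← rpow_natCast]
    norm_num
  rw [h] at hsq
  field_simp
  linear_combination hsq

theorem measure_exp_gt_le (ha : 0 ≤ a) (hκ : 0 < κ)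
    (hint : Integrable (fun x => exp (a * s x)) μ) :
    (μ {x | κ < exp (s x)}).toReal ≤ (∫ x, exp (a * s x) ∂μ) / κ ^ a := by
  have hκa : 0 < κ ^ a := rpow_pos_of_pos hκ a
  have hsub : {x | κ < exp (s x)} ⊆ {x | κ ^ a ≤ exp (a * s x)} := fun x hx => by
    rw [Set.mem_ofPred_eq, mul_comm, exp_mul]
    exact rpow_le_rpow hκ.le hx.le ha
  rw [le_div_iff₀ hκa, mul_comm]
  calc κ ^ a * (μ {x | κ < exp (s x)}).toReal ≤ κ ^ a * μ.real {x | κ ^ a ≤ exp (a * s x)} :=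
        mul_le_mul_of_nonneg_left (measureReal_mono hsub (hint.measure_ge_lt_top hκa).ne) hκa.le
    _ ≤ ∫ x, exp (a * s x) ∂μ :=
        mul_meas_ge_le_integral_of_nonneg (.of_forall fun _ => (exp_pos _).le) hint _

theorem exp_mul_indicator_le (ha : a ≤ 1) (hκ : 0 ≤ κ) (t : ℝ) :
    exp t * Set.indicator {t' | exp t' ≤ κ} (fun _ => (1 : ℝ)) t ≤ κ ^ (1 - a) * exp (a * t) := by
  by_cases ht : exp t ≤ κ
  · rw [Set.indicator_of_mem (s := {t' | exp t' ≤ κ}) ht, mul_one,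
      show exp t = exp (t * (1 - a)) * exp (a * t) by rw [← exp_add]; ring_nf, exp_mul]
    gcongr
  · rw [Set.indicator_of_notMem (s := {t' | exp t' ≤ κ}) ht, mul_zero]
    positivity

theorem integral_exp_mul_indicator_le (ha : a ≤ 1) (hκ : 0 ≤ κ)
    (hint : Integrable (fun x => exp (a * s x)) μ) :
    ∫ x, exp (s x) * Set.indicator {x' | exp (s x') ≤ κ} (fun _ => (1 : ℝ)) x ∂μ ≤
      κ ^ (1 - a) * ∫ x, exp (a * s x) ∂μ := by
  rw [← integral_const_mul]
  refine integral_mono_of_nonneg (.of_forall fun x => ?_) (hint.const_mul _)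
    (.of_forall fun x => exp_mul_indicator_le (t := s x) ha hκ)
  exact mul_nonneg (exp_pos _).le (Set.indicator_nonneg (fun _ _ => zero_le_one) x)

end

theorem stmt19_general {α β : Type*} [MeasurableSpace α]
    (PX : Measure α) [IsProbabilityMeasure PX]
    (ι : α → β → ℝ) (y : β)
    (lam : ℝ) (hlam : lam ∈ Set.Icc (0:ℝ) 1) (M : ℝ) (hM : 1 ≤ M)
    (hint : Integrable (fun x => Real.exp (lam * ι x y)) PX)
    (E κ : ℝ) (hE : E = ∫ x, Real.exp (lam * ι x y) ∂PX)
    (hκ : κ = (M * E) ^ ((1 : ℝ) / (1 + lam))) :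
    (PX {x | κ < Real.exp (ι x y)}).toReal ≤
        M ^ (-(lam / (1 + lam))) * E ^ ((1 : ℝ) / (1 + lam)) ∧
      Real.sqrt (M⁻¹ *
          ∫ x, Real.exp (ι x y) *
            Set.indicator {x' | Real.exp (ι x' y) ≤ κ} (fun _ => (1:ℝ)) x ∂PX) ≤
        M ^ (-(lam / (1 + lam))) * E ^ ((1 : ℝ) / (1 + lam)) := by
  obtain ⟨hlam0, hlam1⟩ := hlam
  have hM0 : 0 < M := by linarith
  have hlam' : 1 + lam ≠ 0 := by linarith
  have hE0 : 0 < E := hE ▸ integral_exp_pos hint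
  have hME : 0 < M * E := mul_pos hM0 hE0
  have hκ0 : 0 < κ := hκ ▸ rpow_pos_of_pos hME _
  have hκpow : κ ^ (1 + lam) = M * E := hκ ▸ rpow_one_div_one_add_rpow hME.le hlam'
  rw [rpow_neg_div_mul_rpow_one_div hM0 hE0.le hlam', ← hκ]
  constructor
  · calc _ ≤ E / κ ^ lam := hE ▸ measure_exp_gt_le hlam0 hκ0 hint
      _ = κ / M := div_rpow_eq_div hκ0 hM0.ne' hκpow
  · rw [sqrt_le_left (div_pos hκ0 hM0).le]
    calc _ ≤ M⁻¹ * (κ ^ (1 - lam) * E) := by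
          gcongr
          exact hE ▸ integral_exp_mul_indicator_le hlam1 hκ0.le hint
      _ = (κ / M) ^ 2 := inv_mul_rpow_mul_eq_sq hκ0 hM0.ne' hκpow

/-- The core computation of the Gallager-type one-shot soft-covering bound: for fixed `y`,
`λ ∈ [0,1]`, `M ≥ 1`, threshold `κ = (M · E[exp(λ ι(X;y))])^{1/(1+λ)}` and
`F = {x : exp(ι(x;y)) ≤ κ}`, both `P[X ∉ F]` and
`√(M⁻¹ E[exp(ι(X;y)) 1_F])` are at most
`M^{−λ/(1+λ)} (E[exp(λ ι(X;y))])^{1/(1+λ)}`, where `X ∼ P_X`. -/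
theorem stmt19 {α β : Type*} [MeasurableSpace α] [MeasurableSpace β]
    (PX : Measure α) [IsProbabilityMeasure PX]
    (ι : α → β → ℝ) (y : β) (hιmeas : Measurable (fun x => ι x y))
    (lam : ℝ) (hlam : lam ∈ Set.Icc (0:ℝ) 1) (M : ℝ) (hM : 1 ≤ M)
    (hint : Integrable (fun x => Real.exp (lam * ι x y)) PX)
    (E κ : ℝ) (hE : E = ∫ x, Real.exp (lam * ι x y) ∂PX)
    (hκ : κ = (M * E) ^ ((1 : ℝ) / (1 + lam))) :
    (PX {x | κ < Real.exp (ι x y)}).toReal ≤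
        M ^ (-(lam / (1 + lam))) * E ^ ((1 : ℝ) / (1 + lam)) ∧
      Real.sqrt (M⁻¹ *
          ∫ x, Real.exp (ι x y) *
            Set.indicator {x' | Real.exp (ι x' y) ≤ κ} (fun _ => (1:ℝ)) x ∂PX) ≤
        M ^ (-(lam / (1 + lam))) * E ^ ((1 : ℝ) / (1 + lam)) :=
  stmt19_general PX ι y lam hlam M hM hint E κ hE hκ
end
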